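/- (Adjacent oriented regions glue along a facet.) Let n ≥ 2, let (i₁,…,iₙ) be a word listing each element of {1,…,n} exactly once, let ε : {1,…,n} → {−1,+1}, and let 1 ≤ a < n. Let (i′₁,…,i′ₙ) be the word obtained from (i₁,…,iₙ) by transposing the letters in positions a and a+1. Then R(ε_{i₁}i₁,…,ε_{iₙ}iₙ) ∩ {C : p_{i_a i_{a+1}}(C) = 0} = R(ε_{i′₁}i′₁,…,ε_{i′ₙ}i′ₙ) ∩ {C : p_{i_a i_{a+1}}(C) = 0}, as subsets of the real 2×n matrices. -/
import Mathlib


namespace OSD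

/-- `p_{ij}(C) = C_{1,i}·C_{2,j} − C_{1,j}·C_{2,i}` for a real `2×n` matrix `C`. -/
def pluck {n : ℕ} (C : Matrix (Fin 2) (Fin n) ℝ) (i j : Fin n) : ℝ :=
  C 0 i * C 1 j - C 0 j * C 1 i

/-- The oriented region `R(ε_{i₁}i₁, …, ε_{iₙ}iₙ)` attached to the word
`(i₁,…,iₙ) = (w 1, …, w n)` and the signs `ε`: the set of real `2×n` matrices `C` of
rank `2` with `ε_{i_a}·ε_{i_b}·p_{i_a i_b}(C) ≥ 0` for all positions `a < b`. -/
def orientedRegion {n : ℕ} (w : Equiv.Perm (Fin n)) (ε : Fin n → ℝ) :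
    Set (Matrix (Fin 2) (Fin n) ℝ) :=
  {C | C.rank = 2 ∧ ∀ a b : Fin n, a < b → 0 ≤ ε (w a) * ε (w b) * pluck C (w a) (w b)}

end OSD

private lemma swap_lt_aux {n : ℕ} (a : Fin n) (ha : a.1 + 1 < n)
    (c d : Fin n) (hcd : c < d) (hne : ¬(c = a ∧ d = ⟨a.1 + 1, ha⟩)) :
    Equiv.swap a ⟨a.1 + 1, ha⟩ c < Equiv.swap a ⟨a.1 + 1, ha⟩ d := by
  simp only [Fin.ext_iff, Fin.val_mk, not_and] at hne
  rw [Equiv.swap_apply_def, Equiv.swap_apply_def]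
  split_ifs <;>
    simp only [Fin.ext_iff, Fin.lt_def, Fin.val_mk] at * <;> omega

private lemma main_aux {n : ℕ} (w : Equiv.Perm (Fin n)) (ε : Fin n → ℝ)
    (C : Matrix (Fin 2) (Fin n) ℝ) (a : Fin n) (ha : a.1 + 1 < n)
    (hp : OSD.pluck C (w a) (w ⟨a.1 + 1, ha⟩) = 0)
    (h : ∀ c d : Fin n, c < d → 0 ≤ ε (w c) * ε (w d) * OSD.pluck C (w c) (w d)) :
    ∀ c d : Fin n, c < d →
      0 ≤ ε (w (Equiv.swap a ⟨a.1 + 1, ha⟩ c)) * ε (w (Equiv.swap a ⟨a.1 + 1, ha⟩ d)) *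
        OSD.pluck C (w (Equiv.swap a ⟨a.1 + 1, ha⟩ c)) (w (Equiv.swap a ⟨a.1 + 1, ha⟩ d)) := by
  intro c d hcd
  by_cases hc : c = a ∧ d = ⟨a.1 + 1, ha⟩
  · obtain ⟨rfl, rfl⟩ := hc
    rw [Equiv.swap_apply_left, Equiv.swap_apply_right]
    have : OSD.pluck C (w ⟨c.1 + 1, ha⟩) (w c) = 0 := by
      unfold OSD.pluck at hp ⊢; linarith
    rw [this, mul_zero]
  · exact h _ _ (swap_lt_aux a ha c d hcd hc)


/-- adjacent oriented regions glue along a facet: if the word `w'` is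
obtained from `w` by transposing the letters in positions `a` and `a+1`, then the
oriented regions of `w` and `w'` have the same intersection with the hypersurface
`p_{i_a i_{a+1}}(C) = 0`. -/
theorem statement11 {n : ℕ} (hn : 2 ≤ n)
    (w : Equiv.Perm (Fin n)) (ε : Fin n → ℝ) (hε : ∀ i, ε i = 1 ∨ ε i = -1)
    (a : Fin n) (ha : a.1 + 1 < n) :
    OSD.orientedRegion w ε ∩ {C | OSD.pluck C (w a) (w ⟨a.1 + 1, ha⟩) = 0} =
      OSD.orientedRegion ((Equiv.swap a ⟨a.1 + 1, ha⟩).trans w) ε ∩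
        {C | OSD.pluck C (w a) (w ⟨a.1 + 1, ha⟩) = 0} := by
  ext C
  simp only [Set.mem_inter_iff, Set.mem_setOf_eq, OSD.orientedRegion]
  constructor
  · rintro ⟨⟨hr, h⟩, hp⟩
    refine ⟨⟨hr, ?_⟩, hp⟩
    intro c d hcd
    exact main_aux w ε C a ha hp h c d hcd
  · rintro ⟨⟨hr, h⟩, hp⟩
    refine ⟨⟨hr, ?_⟩, hp⟩
    intro c d hcd
    set σ := Equiv.swap a ⟨a.1 + 1, ha⟩ with hσ
    have hp' : OSD.pluck C ((σ.trans w) a) ((σ.trans w) ⟨a.1 + 1, ha⟩) = 0 := by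
      simp only [Equiv.trans_apply, hσ, Equiv.swap_apply_left, Equiv.swap_apply_right]
      unfold OSD.pluck at hp ⊢; linarith
    have := main_aux (σ.trans w) ε C a ha hp' h c d hcd
    simpa [Equiv.trans_apply, hσ, Equiv.swap_apply_self] using this
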